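/- arXiv:1909.11086 — 9 statements merged into one kernel-verified Lean document; each statement's English description precedes it below -/
import Mathlib

section
/- Let p : Fin n → ℕ (with p j ≥ 1 for all j), and let m, d, N ∈ ℕ satisfy m·N ≥ n. Then the minimum of the late work Y(μ) over all feasible assignments μ : Fin n → Fin m equals the minimum of the resource overflow Ỹ(σ) over all feasible schedules σ of the resource leveling instance with n unit-time jobs, requirements a = p, m' = N machines, deadline C = m, and resource limit L = d. -/
open Finset

/-- The load of machine `i` under assignment `μ`. -/
def machineLoad {n m : ℕ} (p : Fin n → ℕ) (μ : Fin n → Fin m) (i : Fin m) : ℕ :=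
  ∑ j ∈ univ.filter (fun j => μ j = i), p j

/-- The late work `Y(μ)` with common due date `d`. -/
def lateWork {n m : ℕ} (p : Fin n → ℕ) (d : ℕ) (μ : Fin n → Fin m) : ℕ :=
  ∑ i : Fin m, (machineLoad p μ i - d)

/-- Feasibility of an assignment: at most `N` jobs on each machine. -/
def Feasible {n m : ℕ} (N : ℕ) (μ : Fin n → Fin m) : Prop :=
  ∀ i : Fin m, (univ.filter (fun j => μ j = i)).card ≤ N

/-- Total resource requirement of the jobs started at time `t` under schedule `σ`. -/
def timeLoad {n m' C : ℕ} (a : Fin n → ℕ) (σ : Fin n → Fin m' × Fin C) (t : Fin C) : ℕ :=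
  ∑ j ∈ univ.filter (fun j => (σ j).2 = t), a j

/-- Resource overflow above the limit `L`: `Ỹ(σ)`. -/
def overflow {n m' C : ℕ} (a : Fin n → ℕ) (L : ℕ) (σ : Fin n → Fin m' × Fin C) : ℕ :=
  ∑ t : Fin C, (timeLoad a σ t - L)

/-- the minimum late work over feasible assignments equals the minimum
resource overflow over feasible schedules of the corresponding resource leveling
instance (`a = p`, `m' = N`, `C = m`, `L = d`). -/
theorem min_lateWork_eq_min_overflow {n : ℕ} (m d N : ℕ) (p : Fin n → ℕ)
    (hp : ∀ j, 1 ≤ p j) (hmn : n ≤ m * N) :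
    sInf {y : ℕ | ∃ μ : Fin n → Fin m, Feasible N μ ∧ y = lateWork p d μ} =
    sInf {y : ℕ | ∃ σ : Fin n → Fin N × Fin m,
        Function.Injective σ ∧ y = overflow p d σ} := by
  congr 1
  ext y
  simp only [Set.mem_setOf_eq]
  constructor
  · rintro ⟨μ, hfeas, rfl⟩
    have hemb : ∀ i : Fin m, Nonempty ({j // μ j = i} ↪ Fin N) := fun i => by
      apply Function.Embedding.nonempty_iff_card_le.mpr
      rw [Fintype.card_subtype, Fintype.card_fin]
      exact hfeas i
    classical
    set g : ∀ i : Fin m, {j // μ j = i} ↪ Fin N := fun i => (hemb i).some with hgdef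
    have gcongr : ∀ (i i' : Fin m) (h : i = i') (x : Fin n) (hx : μ x = i)
        (hx' : μ x = i'), g i ⟨x, hx⟩ = g i' ⟨x, hx'⟩ := by
      rintro i i' rfl x hx hx'; rfl
    refine ⟨fun j => (g (μ j) ⟨j, rfl⟩, μ j), ?_, ?_⟩
    · intro j k h
      have h2 : μ j = μ k := congrArg Prod.snd h
      have hf : g (μ j) ⟨j, rfl⟩ = g (μ k) ⟨k, rfl⟩ := congrArg Prod.fst h
      have h1 : g (μ j) ⟨j, rfl⟩ = g (μ j) ⟨k, h2.symm⟩ :=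
        hf.trans (gcongr (μ k) (μ j) h2.symm k rfl h2.symm)
      have := (g (μ j)).injective h1
      exact congrArg Subtype.val this
    · unfold lateWork overflow
      apply Finset.sum_congr rfl
      intro i _
      unfold machineLoad timeLoad
      rfl
  · rintro ⟨σ, hinj, rfl⟩
    refine ⟨fun j => (σ j).2, ?_, ?_⟩
    · intro i
      have : Set.InjOn (fun j => (σ j).1)
          ↑(univ.filter (fun j => (σ j).2 = i)) := by
        intro a ha b hb hab
        simp only [coe_filter, Set.mem_setOf_eq] at ha hb
        exact hinj (Prod.ext hab (ha.2.trans hb.2.symm))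
      calc (univ.filter (fun j => (σ j).2 = i)).card
          = ((univ.filter (fun j => (σ j).2 = i)).image (fun j => (σ j).1)).card :=
            (Finset.card_image_of_injOn this).symm
        _ ≤ (univ : Finset (Fin N)).card := Finset.card_le_card (subset_univ _)
        _ = N := card_univ.trans (Fintype.card_fin N)
    · unfold lateWork overflow machineLoad timeLoad
      rfl
end

section
/- Let p : Fin n → ℕ (with p j ≥ 1 for all j), and let m, d, N ∈ ℕ satisfy m·N ≥ n. Then the maximum of the early work X(μ) over all feasible assignments μ : Fin n → Fin m equals the maximum of the resource usage X̃(σ) over all feasible schedules σ of the resource leveling instance with n unit-time jobs, requirements a = p, m' = N machines, deadline C = m, and resource limit L = d. -/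
open Finset

/-- The early work `X(μ)` with common due date `d`. -/
def earlyWork {n m : ℕ} (p : Fin n → ℕ) (d : ℕ) (μ : Fin n → Fin m) : ℕ :=
  ∑ i : Fin m, min (machineLoad p μ i) d

/-- Resource usage below the limit `L`: `X̃(σ)`. -/
def usageBelow {n m' C : ℕ} (a : Fin n → ℕ) (L : ℕ) (σ : Fin n → Fin m' × Fin C) : ℕ :=
  ∑ t : Fin C, min L (timeLoad a σ t)

/-- the maximum early work over feasible assignments equals the maximum
resource usage below the limit over feasible schedules of the corresponding resource
leveling instance (`a = p`, `m' = N`, `C = m`, `L = d`). -/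
theorem max_earlyWork_eq_max_usageBelow {n : ℕ} (m d N : ℕ) (p : Fin n → ℕ)
    (hp : ∀ j, 1 ≤ p j) (hmn : n ≤ m * N) :
    sSup {x : ℕ | ∃ μ : Fin n → Fin m, Feasible N μ ∧ x = earlyWork p d μ} =
    sSup {x : ℕ | ∃ σ : Fin n → Fin N × Fin m,
        Function.Injective σ ∧ x = usageBelow p d σ} := by
  congr 1
  ext x
  simp only [Set.mem_setOf_eq]
  constructor
  · rintro ⟨μ, hμ, rfl⟩
    set r : Fin n → ℕ := fun j => (univ.filter (fun k => μ k = μ j ∧ k < j)).card with hr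
    have hrN : ∀ j, r j < N := by
      intro j
      have hss : univ.filter (fun k => μ k = μ j ∧ k < j) ⊂
          univ.filter (fun k => μ k = μ j) := by
        refine Finset.ssubset_iff_of_subset ?_ |>.mpr ?_
        · intro k hk; simp only [mem_filter, mem_univ, true_and] at hk ⊢; exact hk.1
        · exact ⟨j, by simp, by simp⟩
      exact lt_of_lt_of_le (Finset.card_lt_card hss) (hμ (μ j))
    have hmono : ∀ j j' : Fin n, μ j = μ j' → j < j' → r j < r j' := by
      intro j j' hμe hlt
      have hss : univ.filter (fun k => μ k = μ j ∧ k < j) ⊂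
          univ.filter (fun k => μ k = μ j' ∧ k < j') := by
        refine Finset.ssubset_iff_of_subset ?_ |>.mpr ?_
        · intro k hk
          simp only [mem_filter, mem_univ, true_and] at hk ⊢
          exact ⟨hμe ▸ hk.1, hk.2.trans hlt⟩
        · exact ⟨j, by simp [hμe, hlt], by simp⟩
      exact Finset.card_lt_card hss
    refine ⟨fun j => (⟨r j, hrN j⟩, μ j), ?_, ?_⟩
    · intro j j' h
      have h2 : μ j = μ j' := congrArg Prod.snd h
      have h1 : r j = r j' := congrArg (fun x : Fin N × Fin m => (x.1 : ℕ)) h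
      by_contra hne
      rcases lt_or_gt_of_ne hne with hlt | hlt
      · exact absurd h1 (hmono j j' h2 hlt).ne
      · exact absurd h1.symm (hmono j' j h2.symm hlt).ne
    · simp [earlyWork, usageBelow, machineLoad, timeLoad, min_comm]
  · rintro ⟨σ, hσ, rfl⟩
    refine ⟨fun j => (σ j).2, ?_, ?_⟩
    · intro i
      have : (univ.filter fun j => (σ j).2 = i).card ≤ (univ : Finset (Fin N)).card := by
        apply Finset.card_le_card_of_injOn (fun j => (σ j).1) (fun _ _ => mem_univ _)
        intro j hj j' hj' h
        simp only [mem_coe, mem_filter, mem_univ, true_and] at hj hj'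
        exact hσ (Prod.ext h (hj.trans hj'.symm))
      simpa using this
    · simp [earlyWork, usageBelow, machineLoad, timeLoad, min_comm]
end

section
/- Let e : Fin n → ℕ with e i ≥ 1 for all i, and let E ∈ ℕ satisfy Σ_{i} e i = 2E. Then there exists a subset H ⊆ Fin n with Σ_{i ∈ H} e i = E if and only if there exists an assignment μ : Fin n → Fin 2 whose late work is zero for the two-machine instance with processing times e and common due date d = E, i.e., Σ_{i=1}^2 max((Σ_{j : μ j = i} e j) − E, 0) = 0. -/
open Finset

/-- PARTITION has a solution iff the corresponding two-machine common-due-date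
instance (processing times `e`, due date `d = E`) admits an assignment with zero late work. -/
theorem partition_iff_zero_lateWork {n : ℕ} (e : Fin n → ℕ) (he : ∀ i, 1 ≤ e i)
    (E : ℕ) (hsum : ∑ i, e i = 2 * E) :
    (∃ H : Finset (Fin n), ∑ i ∈ H, e i = E) ↔
    (∃ μ : Fin n → Fin 2,
      ∑ i : Fin 2, ((∑ j ∈ univ.filter (fun j => μ j = i), e j) - E) = 0) := by
  constructor
  · rintro ⟨H, hH⟩
    refine ⟨fun j => if j ∈ H then 0 else 1, ?_⟩
    have h0 : (univ.filter (fun j => (if j ∈ H then (0:Fin 2) else 1) = 0)) = H := by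
      ext j; simp only [mem_filter, mem_univ, true_and]
      by_cases h : j ∈ H <;> simp [h]
    have h1 : (univ.filter (fun j => (if j ∈ H then (0:Fin 2) else 1) = 1)) = Hᶜ := by
      ext j; simp only [mem_filter, mem_univ, true_and, mem_compl]
      by_cases h : j ∈ H <;> simp [h]
    have hcomp : ∑ j ∈ Hᶜ, e j = E := by
      have := Finset.sum_add_sum_compl H e
      omega
    rw [Fin.sum_univ_two, h0, h1, hH, hcomp]
    omega
  · rintro ⟨μ, hμ⟩
    rw [Fin.sum_univ_two] at hμ
    set A := univ.filter (fun j => μ j = 0) with hA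
    set B := univ.filter (fun j => μ j = 1) with hB
    have hsplit : ∑ j ∈ A, e j + ∑ j ∈ B, e j = 2 * E := by
      rw [← hsum]
      rw [← Finset.sum_filter_add_sum_filter_not univ (fun j => μ j = 0) e]
      congr 1
      apply Finset.sum_congr _ (fun _ _ => rfl)
      ext j; simp only [hB, mem_filter, mem_univ, true_and]
      omega
    refine ⟨A, ?_⟩
    omega
end

section
/- Let H = {j : p j ≥ d} be the set of huge jobs, and suppose |H| ≤ m − 1 and m·N ≥ n. Then there exists a feasible assignment μ* that maximizes the early work among all feasible assignments (equivalently, minimizes the late work) and that is injective on H, i.e., the huge jobs are assigned to pairwise distinct machines. -/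
open Finset

private lemma sum_ite_agree1 {n m : ℕ} (w : Fin n → ℕ) (μ μ' : Fin n → Fin m)
    (j : Fin n) (hagree : ∀ x, x ≠ j → μ' x = μ x) (ℓ : Fin m) :
    (∑ x : Fin n, if μ' x = ℓ then w x else 0) + (if μ j = ℓ then w j else 0)
      = (∑ x : Fin n, if μ x = ℓ then w x else 0) + (if μ' j = ℓ then w j else 0) := by
  classical
  have e1 : ∀ ν : Fin n → Fin m, (∑ x : Fin n, if ν x = ℓ then w x else 0)
      = (if ν j = ℓ then w j else 0)
        + ∑ x ∈ (univ : Finset (Fin n)).erase j, (if ν x = ℓ then w x else 0) := by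
    intro ν
    rw [← Finset.add_sum_erase _ _ (mem_univ j)]
  rw [e1 μ, e1 μ']
  have e2 : ∑ x ∈ (univ : Finset (Fin n)).erase j, (if μ' x = ℓ then w x else 0)
      = ∑ x ∈ (univ : Finset (Fin n)).erase j, (if μ x = ℓ then w x else 0) := by
    refine Finset.sum_congr rfl fun x hx => ?_
    rw [hagree x (Finset.mem_erase.mp hx).1]
  rw [e2]; ring

private lemma sum_ite_agree2 {n m : ℕ} (w : Fin n → ℕ) (μ μ' : Fin n → Fin m)
    (j k : Fin n) (hjk : j ≠ k) (hagree : ∀ x, x ≠ j → x ≠ k → μ' x = μ x) (ℓ : Fin m) :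
    (∑ x : Fin n, if μ' x = ℓ then w x else 0)
        + ((if μ j = ℓ then w j else 0) + (if μ k = ℓ then w k else 0))
      = (∑ x : Fin n, if μ x = ℓ then w x else 0)
        + ((if μ' j = ℓ then w j else 0) + (if μ' k = ℓ then w k else 0)) := by
  classical
  have hk : k ∈ (univ : Finset (Fin n)).erase j := by
    simp [Finset.mem_erase, Ne.symm hjk]
  have e1 : ∀ ν : Fin n → Fin m, (∑ x : Fin n, if ν x = ℓ then w x else 0)
      = (if ν j = ℓ then w j else 0) + ((if ν k = ℓ then w k else 0)
        + ∑ x ∈ ((univ : Finset (Fin n)).erase j).erase k, (if ν x = ℓ then w x else 0)) := by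
    intro ν
    rw [← Finset.add_sum_erase _ _ (mem_univ j), ← Finset.add_sum_erase _ _ hk]
  rw [e1 μ, e1 μ']
  have e2 : ∑ x ∈ ((univ : Finset (Fin n)).erase j).erase k, (if μ' x = ℓ then w x else 0)
      = ∑ x ∈ ((univ : Finset (Fin n)).erase j).erase k, (if μ x = ℓ then w x else 0) := by
    refine Finset.sum_congr rfl fun x hx => ?_
    simp only [Finset.mem_erase] at hx
    rw [hagree x hx.2.1 hx.1]
  rw [e2]; ring

private lemma load_eq_sum_ite {n m : ℕ} (p : Fin n → ℕ) (μ : Fin n → Fin m) (i : Fin m) :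
    machineLoad p μ i = ∑ x : Fin n, if μ x = i then p x else 0 :=
  Finset.sum_filter _ _

private lemma fibercard_eq_sum_ite {n m : ℕ} (μ : Fin n → Fin m) (i : Fin m) :
    (univ.filter (fun j => μ j = i)).card = ∑ x : Fin n, if μ x = i then 1 else 0 :=
  Finset.card_filter _ _

private lemma load_agree {n m : ℕ} (p : Fin n → ℕ) (μ μ' : Fin n → Fin m) (j k : Fin n)
    (hagree : ∀ x, x ≠ j → x ≠ k → μ' x = μ x) (ℓ : Fin m)
    (hj : μ j ≠ ℓ) (hk : μ k ≠ ℓ) (hj' : μ' j ≠ ℓ) (hk' : μ' k ≠ ℓ) :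
    machineLoad p μ' ℓ = machineLoad p μ ℓ := by
  unfold machineLoad
  congr 1
  ext x
  simp only [Finset.mem_filter, Finset.mem_univ, true_and]
  by_cases hxj : x = j
  · subst hxj; simp [hj, hj']
  by_cases hxk : x = k
  · subst hxk; simp [hk, hk']
  rw [hagree x hxj hxk]

private lemma d_le_load {n m : ℕ} (p : Fin n → ℕ) (d : ℕ) (μ : Fin n → Fin m)
    (j : Fin n) (i : Fin m) (hji : μ j = i) (hd : d ≤ p j) :
    d ≤ machineLoad p μ i := by
  refine le_trans hd (Finset.single_le_sum (f := p) (fun x _ => Nat.zero_le _) ?_)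
  simp [hji]

private lemma early_le {n m : ℕ} (p : Fin n → ℕ) (d : ℕ) (μ μ' : Fin n → Fin m) (i i' : Fin m)
    (hfib : ∀ ℓ, ℓ ≠ i → ℓ ≠ i' → machineLoad p μ' ℓ = machineLoad p μ ℓ)
    (hdi : d ≤ machineLoad p μ' i) (hdi' : d ≤ machineLoad p μ' i') :
    earlyWork p d μ ≤ earlyWork p d μ' := by
  unfold earlyWork
  refine Finset.sum_le_sum fun ℓ _ => ?_
  by_cases h1 : ℓ = i
  · subst h1; rw [min_eq_right hdi]; exact min_le_right _ _
  by_cases h2 : ℓ = i'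
  · subst h2; rw [min_eq_right hdi']; exact min_le_right _ _
  · rw [hfib ℓ h1 h2]

private lemma image_grow {n m : ℕ} (d : ℕ) (p : Fin n → ℕ) (μ μ' : Fin n → Fin m)
    (j1 j2 : Fin n) (hne : j1 ≠ j2) (h1 : d ≤ p j1) (h2 : d ≤ p j2) (heq : μ j1 = μ j2)
    (hagree : ∀ x, x ∈ univ.filter (fun j : Fin n => d ≤ p j) → x ≠ j1 → μ' x = μ x)
    (hi' : μ' j1 ∉ (univ.filter (fun j : Fin n => d ≤ p j)).image μ) :
    ((univ.filter (fun j : Fin n => d ≤ p j)).image μ).card + 1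
      ≤ ((univ.filter (fun j : Fin n => d ≤ p j)).image μ').card := by
  classical
  have hsub : insert (μ' j1) ((univ.filter (fun j : Fin n => d ≤ p j)).image μ)
      ⊆ (univ.filter (fun j : Fin n => d ≤ p j)).image μ' := by
    intro y hy
    rcases Finset.mem_insert.mp hy with hy | hy
    · subst hy
      exact Finset.mem_image_of_mem μ' (by simp [h1])
    · obtain ⟨x, hx, hxy⟩ := Finset.mem_image.mp hy
      by_cases hxj : x = j1
      · subst hxj
        refine Finset.mem_image.mpr ⟨j2, by simp [h2], ?_⟩
        rw [hagree j2 (by simp [h2]) (Ne.symm hne), ← heq, hxy]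
      · exact Finset.mem_image.mpr ⟨x, hx, by rw [hagree x hx hxj]; exact hxy⟩
  calc ((univ.filter (fun j : Fin n => d ≤ p j)).image μ).card + 1
      = (insert (μ' j1) ((univ.filter (fun j : Fin n => d ≤ p j)).image μ)).card :=
        (Finset.card_insert_of_notMem hi').symm
    _ ≤ _ := Finset.card_le_card hsub

private lemma swap_improve {n m : ℕ} (p : Fin n → ℕ) (d N : ℕ) (μ : Fin n → Fin m)
    (hfeas : Feasible N μ) (j1 j2 : Fin n) (hne : j1 ≠ j2) (h1 : d ≤ p j1) (h2 : d ≤ p j2)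
    (heq : μ j1 = μ j2) (i' : Fin m)
    (hi' : i' ∉ (univ.filter (fun j : Fin n => d ≤ p j)).image μ) :
    ∃ μ' : Fin n → Fin m, Feasible N μ' ∧ earlyWork p d μ ≤ earlyWork p d μ' ∧
      ((univ.filter (fun j : Fin n => d ≤ p j)).image μ).card + 1 ≤
        ((univ.filter (fun j : Fin n => d ≤ p j)).image μ').card := by
  classical
  have hmemi : μ j1 ∈ (univ.filter (fun j : Fin n => d ≤ p j)).image μ :=
    Finset.mem_image_of_mem μ (by simp [h1])
  have hii' : μ j1 ≠ i' := fun h => hi' (h ▸ hmemi)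
  by_cases hcap : (univ.filter (fun x => μ x = i')).card < N
  · -- Case A : just move j1 to machine i'
    set μ' := Function.update μ j1 i' with hμ'
    have hagree : ∀ x, x ≠ j1 → μ' x = μ x := fun x hx => Function.update_of_ne hx _ _
    have hj1' : μ' j1 = i' := Function.update_self _ _ _
    have hj2' : μ' j2 = μ j1 := by rw [hagree j2 (Ne.symm hne), heq]
    refine ⟨μ', ?_, ?_, ?_⟩
    · -- feasibility
      intro ℓ
      have key := sum_ite_agree1 (fun _ => 1) μ μ' j1 hagree ℓ
      rw [← fibercard_eq_sum_ite, ← fibercard_eq_sum_ite] at key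
      have hfl := hfeas ℓ
      by_cases hℓ : ℓ = i'
      · subst hℓ
        rw [if_neg hii', if_pos hj1'] at key
        omega
      · rw [if_neg (fun h => hℓ (hj1'.symm.trans h).symm)] at key
        by_cases hb : μ j1 = ℓ
        · rw [if_pos hb] at key; omega
        · rw [if_neg hb] at key; omega
    · -- early work does not decrease
      refine early_le p d μ μ' (μ j1) i' ?_ ?_ ?_
      · intro ℓ hℓ1 hℓ2
        refine load_agree p μ μ' j1 j1 (fun x hx _ => hagree x hx) ℓ
          (Ne.symm hℓ1) (Ne.symm hℓ1) ?_ ?_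
        · rw [hj1']; exact Ne.symm hℓ2
        · rw [hj1']; exact Ne.symm hℓ2
      · exact d_le_load p d μ' j2 (μ j1) hj2' h2
      · exact d_le_load p d μ' j1 i' hj1' h1
    · -- image grows
      refine image_grow d p μ μ' j1 j2 hne h1 h2 heq (fun x _ hx => hagree x hx) ?_
      rw [hj1']; exact hi'
  · -- Case B : swap j1 with a non-huge job k on machine i'
    have hcap' : (univ.filter (fun x => μ x = i')).card = N :=
      le_antisymm (hfeas i') (not_lt.mp hcap)
    have hN : 1 ≤ N := by
      have := hfeas (μ j1)
      have h1' : 0 < (univ.filter (fun x => μ x = μ j1)).card :=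
        Finset.card_pos.mpr ⟨j1, by simp⟩
      omega
    obtain ⟨k, hk⟩ : ∃ k, μ k = i' := by
      have : 0 < (univ.filter (fun x => μ x = i')).card := by omega
      obtain ⟨k, hk⟩ := Finset.card_pos.mp this
      exact ⟨k, (Finset.mem_filter.mp hk).2⟩
    have hkH : ¬ d ≤ p k := fun h => hi' (Finset.mem_image.mpr ⟨k, by simp [h], hk⟩)
    have hkj1 : k ≠ j1 := fun h => hii' (by rw [← h]; exact hk)
    have hkj2 : k ≠ j2 := fun h => hii' (by rw [heq, ← h]; exact hk)
    set μ' := Function.update (Function.update μ j1 i') k (μ j1) with hμ'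
    have hagree : ∀ x, x ≠ j1 → x ≠ k → μ' x = μ x := fun x hx1 hxk => by
      rw [hμ', Function.update_of_ne hxk, Function.update_of_ne hx1]
    have hj1' : μ' j1 = i' := by
      rw [hμ', Function.update_of_ne (Ne.symm hkj1), Function.update_self]
    have hk' : μ' k = μ j1 := Function.update_self _ _ _
    have hj2' : μ' j2 = μ j1 := by
      rw [hagree j2 (Ne.symm hne) (Ne.symm hkj2), heq]
    refine ⟨μ', ?_, ?_, ?_⟩
    · -- feasibility
      intro ℓ
      have key := sum_ite_agree2 (fun _ => 1) μ μ' j1 k (Ne.symm hkj1) hagree ℓ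
      rw [← fibercard_eq_sum_ite, ← fibercard_eq_sum_ite] at key
      have hfl := hfeas ℓ
      by_cases hℓ1 : ℓ = μ j1
      · subst hℓ1
        rw [if_pos rfl, if_neg (by rw [hk]; exact Ne.symm hii'),
          if_neg (by rw [hj1']; exact Ne.symm hii'), if_pos hk'] at key
        omega
      · by_cases hℓ2 : ℓ = i'
        · subst hℓ2
          rw [if_neg hii', if_pos hk, if_pos hj1',
            if_neg (by rw [hk']; exact hii')] at key
          omega
        · rw [if_neg (fun h : μ j1 = ℓ => hℓ1 h.symm),
            if_neg (by rw [hk]; exact fun h => hℓ2 h.symm),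
            if_neg (by rw [hj1']; exact fun h => hℓ2 h.symm),
            if_neg (by rw [hk']; exact fun h => hℓ1 h.symm)] at key
          omega
    · -- early work does not decrease
      refine early_le p d μ μ' (μ j1) i' ?_ ?_ ?_
      · intro ℓ hℓ1 hℓ2
        refine load_agree p μ μ' j1 k hagree ℓ (Ne.symm hℓ1) ?_ ?_ ?_
        · rw [hk]; exact Ne.symm hℓ2
        · rw [hj1']; exact Ne.symm hℓ2
        · rw [hk']; exact Ne.symm hℓ1
      · exact d_le_load p d μ' j2 (μ j1) hj2' h2
      · exact d_le_load p d μ' j1 i' hj1' h1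
    · -- image grows
      refine image_grow d p μ μ' j1 j2 hne h1 h2 heq ?_ ?_
      · intro x hx hxj1
        refine hagree x hxj1 fun h => hkH ?_
        rw [← h]; exact (Finset.mem_filter.mp hx).2
      · rw [hj1']; exact hi'

private lemma sum_loads {n m : ℕ} (p : Fin n → ℕ) (μ : Fin n → Fin m) :
    ∑ i : Fin m, machineLoad p μ i = ∑ j : Fin n, p j := by
  classical
  unfold machineLoad
  exact Finset.sum_fiberwise _ _ _

private lemma early_add_late {n m : ℕ} (p : Fin n → ℕ) (d : ℕ) (μ : Fin n → Fin m) :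
    earlyWork p d μ + lateWork p d μ = ∑ j : Fin n, p j := by
  unfold earlyWork lateWork
  rw [← Finset.sum_add_distrib]
  rw [Finset.sum_congr rfl
    (fun i _ => by omega : ∀ i ∈ univ,
      min (machineLoad p μ i) d + (machineLoad p μ i - d) = machineLoad p μ i)]
  exact sum_loads p μ

/-- if there are at most `m − 1` huge jobs and `m·N ≥ n`, then some feasible
assignment maximizing the early work (equivalently, minimizing the late work) assigns the
huge jobs to pairwise distinct machines. -/
theorem exists_optimal_injOn_huge {n m : ℕ} (p : Fin n → ℕ) (hp : ∀ j, 1 ≤ p j)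
    (d N : ℕ) (hH : (univ.filter (fun j : Fin n => d ≤ p j)).card ≤ m - 1)
    (hmn : n ≤ m * N) :
    ∃ μ : Fin n → Fin m, Feasible N μ ∧
      (∀ μ' : Fin n → Fin m, Feasible N μ' → earlyWork p d μ' ≤ earlyWork p d μ) ∧
      (∀ μ' : Fin n → Fin m, Feasible N μ' → lateWork p d μ ≤ lateWork p d μ') ∧
      Set.InjOn μ {j : Fin n | d ≤ p j} := by
  classical
  rcases Nat.eq_zero_or_pos n with hn | hn
  · -- trivial case: no jobs
    subst hn
    refine ⟨Fin.elim0, ?_, ?_, ?_, ?_⟩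
    · intro i
      simp [Finset.filter_true_of_mem]
    · intro μ' _
      have h0 : ∀ ν : Fin 0 → Fin m, earlyWork p d ν = 0 := by
        intro ν
        unfold earlyWork machineLoad
        simp
      rw [h0 μ', h0 Fin.elim0]
    · intro μ' _
      have h0 : ∀ ν : Fin 0 → Fin m, lateWork p d ν = 0 := by
        intro ν
        unfold lateWork machineLoad
        simp
      rw [h0 μ', h0 Fin.elim0]
    · intro a _
      exact a.elim0
  -- main case: n ≥ 1
  have hm : 1 ≤ m := by
    rcases Nat.eq_zero_or_pos m with h | h
    · subst h; simp at hmn; omega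
    · exact h
  have hNpos : 1 ≤ N := by
    rcases Nat.eq_zero_or_pos N with h | h
    · subst h; simp at hmn; omega
    · exact h
  -- a feasible assignment exists
  have hfeas0 : ∃ μ0 : Fin n → Fin m, Feasible N μ0 := by
    refine ⟨fun j => ⟨j.val / N, ?_⟩, ?_⟩
    · exact (Nat.div_lt_iff_lt_mul hNpos).mpr (lt_of_lt_of_le j.isLt hmn)
    · intro i
      have : (univ.filter (fun j : Fin n => (⟨j.val / N,
          (Nat.div_lt_iff_lt_mul hNpos).mpr (lt_of_lt_of_le j.isLt hmn)⟩ : Fin m) = i)).card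
          ≤ (Finset.range N).card := by
        refine Finset.card_le_card_of_injOn (fun j => j.val % N) ?_ ?_
        · intro j _
          exact Finset.mem_range.mpr (Nat.mod_lt _ hNpos)
        · intro a ha b hb hab
          simp only [Finset.coe_filter, Finset.mem_coe, Finset.mem_filter,
            Finset.mem_univ, true_and, Set.mem_setOf_eq] at ha hb
          have ha' : a.val / N = i.val := congrArg Fin.val ha
          have hb' : b.val / N = i.val := congrArg Fin.val hb
          have hab' : a.val % N = b.val % N := hab
          have : a.val = b.val := by
            calc a.val = N * (a.val / N) + a.val % N := (Nat.div_add_mod _ _).symm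
              _ = N * (b.val / N) + b.val % N := by rw [ha', hb', hab']
              _ = b.val := Nat.div_add_mod _ _
          exact Fin.ext this
      simpa using this
  obtain ⟨μ0, hμ0⟩ := hfeas0
  -- choose a feasible assignment maximizing f
  set f : (Fin n → Fin m) → ℕ :=
    fun μ => (m + 1) * earlyWork p d μ
      + ((univ.filter (fun j : Fin n => d ≤ p j)).image μ).card with hfdef
  obtain ⟨μ, hμmem, hμmax⟩ := Finset.exists_max_image
    ((univ : Finset (Fin n → Fin m)).filter (fun μ => Feasible N μ)) f
    ⟨μ0, Finset.mem_filter.mpr ⟨Finset.mem_univ _, hμ0⟩⟩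
  have hμfeas : Feasible N μ := (Finset.mem_filter.mp hμmem).2
  have hmax : ∀ μ' : Fin n → Fin m, Feasible N μ' → f μ' ≤ f μ := by
    intro μ' h
    exact hμmax μ' (Finset.mem_filter.mpr ⟨Finset.mem_univ _, h⟩)
  have himg_le : ∀ ν : Fin n → Fin m,
      ((univ.filter (fun j : Fin n => d ≤ p j)).image ν).card ≤ m := by
    intro ν
    calc ((univ.filter (fun j : Fin n => d ≤ p j)).image ν).card
        ≤ Fintype.card (Fin m) := Finset.card_le_univ _
      _ = m := Fintype.card_fin m
  -- early work maximality
  have hearly : ∀ μ' : Fin n → Fin m, Feasible N μ' → earlyWork p d μ' ≤ earlyWork p d μ := by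
    intro μ' h
    by_contra hcon
    push_neg at hcon
    have hf := hmax μ' h
    have h1 := himg_le μ'
    have h2 := himg_le μ
    rw [hfdef] at hf
    simp only at hf
    nlinarith [hf, hcon, h1, h2]
  refine ⟨μ, hμfeas, hearly, ?_, ?_⟩
  · -- late work minimality
    intro μ' h
    have e1 := early_add_late p d μ
    have e2 := early_add_late p d μ'
    have := hearly μ' h
    omega
  · -- injectivity on huge jobs
    intro a ha b hb hab
    by_contra hne
    -- find a machine with no huge job
    have hcard : ((univ.filter (fun j : Fin n => d ≤ p j)).image μ).card < m := by
      have := Finset.card_image_le (s := univ.filter (fun j : Fin n => d ≤ p j)) (f := μ)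
      omega
    obtain ⟨i', _, hi'⟩ : ∃ i' ∈ (univ : Finset (Fin m)),
        i' ∉ (univ.filter (fun j : Fin n => d ≤ p j)).image μ := by
      by_contra hcon
      push_neg at hcon
      have hsub : (univ : Finset (Fin m)) ⊆ (univ.filter (fun j : Fin n => d ≤ p j)).image μ := fun x hx => hcon x hx
      have := Finset.card_le_card hsub
      simp only [Finset.card_univ, Fintype.card_fin] at this
      omega
    have ha' : d ≤ p a := ha
    have hb' : d ≤ p b := hb
    obtain ⟨μ'', hfeas'', hearly'', himg''⟩ :=
      swap_improve p d N μ hμfeas a b hne ha' hb' hab i' hi'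
    have hf := hmax μ'' hfeas''
    rw [hfdef] at hf
    simp only at hf
    have hmul : (m + 1) * earlyWork p d μ ≤ (m + 1) * earlyWork p d μ'' :=
      Nat.mul_le_mul_left _ hearly''
    omega
end

section
/- Let ε be a real number with 0 < ε < 1, and let d, q be positive integers with ε²·d ≤ q < d. Let q' be the largest element of the set {⌈ε²·d·(1+ε)^k⌉ : k ∈ ℕ} that does not exceed q (this set contains elements ≤ q, e.g. for k = 0). Then q/(1+ε) < q' ≤ q. -/
/-- rounding down a big processing time `q` (with `ε²d ≤ q < d`) to the
largest value of the form `⌈ε²·d·(1+ε)^k⌉` not exceeding `q` loses at most a factor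
`1 + ε`: the rounded value `q'` satisfies `q/(1+ε) < q' ≤ q`. -/
theorem rounding_down_big_job (ε : ℝ) (hε0 : 0 < ε) (hε1 : ε < 1)
    (d q : ℕ) (hd : 0 < d) (hq : 0 < q)
    (hlow : ε ^ 2 * d ≤ (q : ℝ)) (hhigh : (q : ℝ) < d)
    (q' : ℤ)
    (hq' : IsGreatest
      {x : ℤ | (∃ k : ℕ, x = ⌈ε ^ 2 * d * (1 + ε) ^ k⌉) ∧ x ≤ (q : ℤ)} q') :
    (q : ℝ) / (1 + ε) < (q' : ℝ) ∧ (q' : ℤ) ≤ (q : ℤ) := by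
  obtain ⟨⟨⟨k0, hk0⟩, hq'le⟩, hmax⟩ := hq'
  refine ⟨?_, hq'le⟩
  by_contra h
  push_neg at h
  have hε0' : (0:ℝ) < 1 + ε := by linarith
  have hc0 : (0:ℝ) < ε ^ 2 * d := by positivity
  -- the value for k = 0 is in the set
  have hcq : ⌈ε ^ 2 * (d:ℝ)⌉ ≤ (q:ℤ) := Int.ceil_le.mpr (by exact_mod_cast hlow)
  have hmem0 : ⌈ε ^ 2 * (d:ℝ)⌉ ≤ q' := hmax ⟨⟨0, by simp⟩, hcq⟩
  have hcq' : ε ^ 2 * (d:ℝ) ≤ (q':ℝ) :=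
    le_trans (Int.le_ceil _) (by exact_mod_cast hmem0)
  have hq'pos : (0:ℝ) < (q':ℝ) := lt_of_lt_of_le hc0 hcq'
  -- there is some m with c·(1+ε)^m > q'
  have hex : ∃ m : ℕ, (q':ℝ) < ε ^ 2 * d * (1 + ε) ^ m := by
    obtain ⟨M, hM⟩ := pow_unbounded_of_one_lt ((q':ℝ) / (ε ^ 2 * d))
      (by linarith : (1:ℝ) < 1 + ε)
    refine ⟨M, ?_⟩
    rw [div_lt_iff₀ hc0] at hM
    calc (q':ℝ) < (1+ε)^M * (ε^2*d) := hM
    _ = ε ^ 2 * d * (1+ε)^M := by ring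
  classical
  set m := Nat.find hex with hmdef
  have hm : (q':ℝ) < ε ^ 2 * d * (1 + ε) ^ m := Nat.find_spec hex
  have hm0 : m ≠ 0 := by
    intro h0
    rw [h0, pow_zero, mul_one] at hm
    linarith
  obtain ⟨n, hn⟩ := Nat.exists_eq_succ_of_ne_zero hm0
  have hprev : ¬ (q':ℝ) < ε ^ 2 * d * (1 + ε) ^ n :=
    Nat.find_min hex (by omega)
  push_neg at hprev
  have hstep : ε ^ 2 * d * (1 + ε) ^ m ≤ (q':ℝ) * (1 + ε) := by
    have h2 := mul_le_mul_of_nonneg_right hprev (le_of_lt hε0')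
    calc ε ^ 2 * d * (1 + ε) ^ m = ε ^ 2 * d * (1 + ε) ^ n * (1 + ε) := by
          rw [hn, pow_succ (1 + ε) n, ← mul_assoc]
    _ ≤ (q':ℝ) * (1 + ε) := h2
  have hq'q : (q':ℝ) * (1 + ε) ≤ (q:ℝ) := by
    rw [le_div_iff₀ hε0'] at h
    linarith
  have hle : ε ^ 2 * d * (1 + ε) ^ m ≤ (q:ℝ) := le_trans hstep hq'q
  have hmemm : ⌈ε ^ 2 * (d:ℝ) * (1 + ε) ^ m⌉ ≤ (q:ℤ) :=
    Int.ceil_le.mpr (by exact_mod_cast hle)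
  have hle2 : ⌈ε ^ 2 * (d:ℝ) * (1 + ε) ^ m⌉ ≤ q' := hmax ⟨⟨m, rfl⟩, hmemm⟩
  have hgt : (q':ℝ) < (⌈ε ^ 2 * (d:ℝ) * (1 + ε) ^ m⌉ : ℝ) :=
    lt_of_lt_of_le hm (Int.le_ceil _)
  have : (q':ℝ) < (q':ℝ) := lt_of_lt_of_le hgt (by exact_mod_cast hle2)
  exact lt_irrefl _ this
end

section
/- Let ε be a real number with 0 < ε < 1, and let d, q be positive integers with ε²·d ≤ q < d. Let q' be the smallest element of the set {⌊ε²·d·(1+ε)^k⌋ : k ∈ ℕ} that is greater than or equal to q (this set contains elements ≥ q since (1+ε)^k → ∞). Then q ≤ q' ≤ (1+ε)·q. -/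
/-- rounding up a big processing time `q` (with `ε²d ≤ q < d`) to the
smallest value of the form `⌊ε²·d·(1+ε)^k⌋` that is at least `q` increases it by at most
a factor `1 + ε`: the rounded value `q'` satisfies `q ≤ q' ≤ (1+ε)·q`. -/
theorem rounding_up_big_job (ε : ℝ) (hε0 : 0 < ε) (hε1 : ε < 1)
    (d q : ℕ) (hd : 0 < d) (hq : 0 < q)
    (hlow : ε ^ 2 * d ≤ (q : ℝ)) (hhigh : (q : ℝ) < d)
    (q' : ℤ)
    (hq' : IsLeast
      {x : ℤ | (∃ k : ℕ, x = ⌊ε ^ 2 * d * (1 + ε) ^ k⌋) ∧ (q : ℤ) ≤ x} q') :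
    (q : ℤ) ≤ q' ∧ (q' : ℝ) ≤ (1 + ε) * q := by
  classical
  obtain ⟨⟨_, hqle⟩, hmin⟩ := hq'
  refine ⟨hqle, ?_⟩
  have hd' : (0:ℝ) < d := by exact_mod_cast hd
  have hq0 : (0:ℝ) < q := by exact_mod_cast hq
  have hεd : (0:ℝ) < ε ^ 2 * d := by positivity
  have hone : (1:ℝ) < 1 + ε := by linarith
  have hex : ∃ k : ℕ, (q:ℝ) ≤ ε ^ 2 * d * (1 + ε) ^ k := by
    obtain ⟨n, hn⟩ := pow_unbounded_of_one_lt ((q:ℝ) / (ε ^ 2 * d)) hone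
    refine ⟨n, ?_⟩
    rw [div_lt_iff₀ hεd] at hn
    nlinarith
  set k := Nat.find hex with hk
  have hkspec : (q:ℝ) ≤ ε ^ 2 * d * (1 + ε) ^ k := Nat.find_spec hex
  have hmem : q' ≤ ⌊ε ^ 2 * d * (1 + ε) ^ k⌋ :=
    hmin ⟨⟨k, rfl⟩, Int.le_floor.mpr (by exact_mod_cast hkspec)⟩
  have hfl : ((⌊ε ^ 2 * d * (1 + ε) ^ k⌋ : ℤ) : ℝ) ≤ ε ^ 2 * d * (1 + ε) ^ k :=
    Int.floor_le _
  have hq'le : (q':ℝ) ≤ ε ^ 2 * d * (1 + ε) ^ k :=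
    le_trans (by exact_mod_cast hmem) hfl
  rcases Nat.eq_zero_or_pos k with h0 | hpos
  · rw [h0, pow_zero, mul_one] at hq'le
    nlinarith
  · obtain ⟨m, hm⟩ : ∃ m, k = m + 1 := ⟨k - 1, by omega⟩
    have hnot : ¬ ((q:ℝ) ≤ ε ^ 2 * d * (1 + ε) ^ m) := Nat.find_min hex (by omega)
    push_neg at hnot
    have heq : ε ^ 2 * d * (1 + ε) ^ k = (1 + ε) * (ε ^ 2 * d * (1 + ε) ^ m) := by
      rw [hm]; rw [pow_succ]; ring
    nlinarith
end

section
/- Let ε be a real number with 0 < ε ≤ 1, and suppose m·N ≥ n and there are at least m jobs j with p j ≥ ε·d. Then there exists a feasible assignment μ with early work X(μ) ≥ ε·m·d; in particular, the maximum early work over feasible assignments is at least ε·m·d. -/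
open Finset

/-!
Pick `m` long jobs and put one on each machine; every machine then has early work at
least `min (ε d) d = ε d`. The remaining jobs are spread round-robin: after listing the
jobs so that the chosen long jobs come first, job number `r` goes to machine `r mod m`.
Since there are `n ≤ m N` jobs, each residue class mod `m` below `n` has at most `N`
elements, so the assignment is feasible.
-/

open Function

theorem card_filter_mod_eq_le {α : Type*} [Fintype α] {f : α → ℕ} (hf : Injective f)
    {m N : ℕ} (hlt : ∀ a, f a < m * N) (i : ℕ) : #{a | f a % m = i} ≤ N := by
  calc #{a | f a % m = i} ≤ #(range N) := by
        refine card_le_card_of_injOn (fun a => f a / m) (fun a _ => ?_) fun a ha b hb hab => ?_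
        · simpa using Nat.div_lt_of_lt_mul (hlt a)
        · simp only [coe_filter, mem_univ, true_and, Set.mem_ofPred_eq] at ha hb
          apply hf
          rw [← Nat.div_add_mod (f a) m, ← Nat.div_add_mod (f b) m, ha, hb]
          exact congrArg (m * · + i) hab
    _ = N := card_range N

theorem exists_feasible_extending {n m N : ℕ} (hmn : n ≤ m * N) {e : Fin m → Fin n}
    (he : Injective e) : ∃ μ : Fin n → Fin m, Feasible N μ ∧ ∀ i, μ (e i) = i := by
  rcases Nat.eq_zero_or_pos m with rfl | hm
  · exact ⟨fun j => absurd j.2 (by omega), fun i => i.elim0, fun i => i.elim0⟩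
  obtain ⟨σ, hσ⟩ := Equiv.Perm.exists_extending_pair e (Fin.castLE (Fintype.card_fin m ▸
    Fintype.card_fin n ▸ Fintype.card_le_of_injective e he)) he (Fin.castLE_injective _)
  refine ⟨fun j => ⟨σ j % m, Nat.mod_lt _ hm⟩, fun i => ?_, fun i => ?_⟩
  · simp only [Fin.ext_iff]
    exact card_filter_mod_eq_le (Fin.val_injective.comp σ.injective)
      (fun j => (σ j).2.trans_le hmn) i
  · ext
    simp [hσ, Nat.mod_eq_of_lt i.2]

theorem apply_le_machineLoad {n m : ℕ} (p : Fin n → ℕ) {μ : Fin n → Fin m} {j : Fin n}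
    {i : Fin m} (h : μ j = i) : p j ≤ machineLoad p μ i :=
  single_le_sum (fun _ _ => Nat.zero_le _) (by simp [h])

theorem sum_min_le_earlyWork {n m : ℕ} (p : Fin n → ℕ) (d : ℕ) {μ : Fin n → Fin m}
    {e : Fin m → Fin n} (he : ∀ i, μ (e i) = i) :
    ∑ i, min (p (e i)) d ≤ earlyWork p d μ :=
  sum_le_sum fun i _ => min_le_min_right d (apply_le_machineLoad p (he i))

theorem earlyWork_le_sSup {n m : ℕ} (p : Fin n → ℕ) (d N : ℕ) {μ : Fin n → Fin m}
    (hμ : Feasible N μ) :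
    earlyWork p d μ ≤ sSup {x : ℕ | ∃ μ : Fin n → Fin m, Feasible N μ ∧ x = earlyWork p d μ} := by
  refine le_csSup ⟨m * d, ?_⟩ ⟨μ, hμ, rfl⟩
  rintro x ⟨μ', -, rfl⟩
  calc earlyWork p d μ' ≤ ∑ _i : Fin m, d := sum_le_sum fun i _ => min_le_right _ _
    _ = m * d := by simp

theorem many_long_jobs_early_work_general {n m : ℕ} (p : Fin n → ℕ)
    (d N : ℕ) (ε : ℝ) (hε1 : ε ≤ 1) (hmn : n ≤ m * N)
    (hlong : m ≤ Set.ncard {j : Fin n | ε * (d : ℝ) ≤ (p j : ℝ)}) :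
    (∃ μ : Fin n → Fin m, Feasible N μ ∧ ε * m * d ≤ (earlyWork p d μ : ℝ)) ∧
    ε * m * d ≤
      ((sSup {x : ℕ | ∃ μ : Fin n → Fin m, Feasible N μ ∧ x = earlyWork p d μ} : ℕ) : ℝ) := by
  rw [Set.ncard_eq_toFinset_card'] at hlong
  obtain ⟨e, he_long⟩ := Embedding.exists_of_card_le_finset (α := Fin m) (by simpa using hlong)
  obtain ⟨μ, hμ, hμe⟩ := exists_feasible_extending hmn e.injective
  have hεd : ε * d ≤ d := mul_le_of_le_one_left d.cast_nonneg hε1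
  have hX : ε * m * d ≤ (earlyWork p d μ : ℝ) :=
    calc ε * m * d = ∑ _i : Fin m, ε * d := by simp; ring
      _ ≤ ∑ i, ((min (p (e i)) d : ℕ) : ℝ) := sum_le_sum fun i _ => by
        have hi : ε * d ≤ p (e i) := by simpa using he_long (Set.mem_range_self i)
        simpa using ⟨hi, hεd⟩
      _ ≤ earlyWork p d μ := mod_cast sum_min_le_earlyWork p d hμe
  exact ⟨⟨μ, hμ, hX⟩, hX.trans (mod_cast earlyWork_le_sSup p d N hμ)⟩

/-- if `m·N ≥ n` and there are at least `m` jobs of processing time at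
least `ε·d`, then some feasible assignment has early work at least `ε·m·d`; in particular
the maximum early work over feasible assignments is at least `ε·m·d`. -/
theorem many_long_jobs_early_work {n m : ℕ} (p : Fin n → ℕ) (hp : ∀ j, 1 ≤ p j)
    (d N : ℕ) (ε : ℝ) (hε0 : 0 < ε) (hε1 : ε ≤ 1) (hmn : n ≤ m * N)
    (hlong : m ≤ Set.ncard {j : Fin n | ε * (d : ℝ) ≤ (p j : ℝ)}) :
    (∃ μ : Fin n → Fin m, Feasible N μ ∧ ε * m * d ≤ (earlyWork p d μ : ℝ)) ∧
    ε * m * d ≤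
      ((sSup {x : ℕ | ∃ μ : Fin n → Fin m, Feasible N μ ∧ x = earlyWork p d μ} : ℕ) : ℝ) :=
  many_long_jobs_early_work_general p d N ε hε1 hmn hlong
end

section
/- Let ε be a real number with 0 ≤ ε ≤ 1, and let μ : Fin n → Fin m be a feasible assignment such that load_i(μ) ≥ (1−ε²)·d for every machine i. Then X(μ) ≥ (1−ε²)·m·d, and X(μ) ≥ (1−ε)·X(μ') for every feasible assignment μ'. -/
open Finset

/-- if every machine has load at least `(1−ε²)·d` under the feasible
assignment `μ`, then `X(μ) ≥ (1−ε²)·m·d` and `X(μ) ≥ (1−ε)·X(μ')` for every feasible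
assignment `μ'`. -/
theorem full_machines_near_optimal {n m : ℕ} (p : Fin n → ℕ) (hp : ∀ j, 1 ≤ p j)
    (d N : ℕ) (ε : ℝ) (hε0 : 0 ≤ ε) (hε1 : ε ≤ 1)
    (μ : Fin n → Fin m) (hfeas : Feasible N μ)
    (hload : ∀ i : Fin m, (1 - ε ^ 2) * (d : ℝ) ≤ (machineLoad p μ i : ℝ)) :
    (1 - ε ^ 2) * m * d ≤ (earlyWork p d μ : ℝ) ∧
    ∀ μ' : Fin n → Fin m, Feasible N μ' →
      (1 - ε) * (earlyWork p d μ' : ℝ) ≤ (earlyWork p d μ : ℝ) := by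
  have hd : (0:ℝ) ≤ d := Nat.cast_nonneg d
  have hε2 : (0:ℝ) ≤ ε ^ 2 := sq_nonneg ε
  have hmin : ∀ i : Fin m, (1 - ε ^ 2) * (d : ℝ) ≤ (min (machineLoad p μ i) d : ℕ) := by
    intro i
    rcases min_cases (machineLoad p μ i) d with ⟨h, _⟩ | ⟨h, _⟩
    · rw [h]; exact hload i
    · rw [h]
      nlinarith
  have h1 : (1 - ε ^ 2) * m * d ≤ (earlyWork p d μ : ℝ) := by
    have := Finset.sum_le_sum (fun i (_ : i ∈ (univ : Finset (Fin m))) => hmin i)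
    simp only [Finset.sum_const, Finset.card_univ, Fintype.card_fin, nsmul_eq_mul] at this
    calc (1 - ε ^ 2) * m * d = m * ((1 - ε ^ 2) * d) := by ring
    _ ≤ ∑ i : Fin m, ((min (machineLoad p μ i) d : ℕ) : ℝ) := this
    _ = (earlyWork p d μ : ℝ) := by rw [earlyWork]; push_cast; ring
  refine ⟨h1, fun μ' _ => ?_⟩
  have hub : (earlyWork p d μ' : ℝ) ≤ m * d := by
    have : earlyWork p d μ' ≤ ∑ _i : Fin m, d :=
      Finset.sum_le_sum (fun i _ => min_le_right _ _)
    simp only [Finset.sum_const, Finset.card_univ, Fintype.card_fin, smul_eq_mul] at this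
    calc (earlyWork p d μ' : ℝ) ≤ ((m * d : ℕ) : ℝ) := by exact_mod_cast this
    _ = m * d := by push_cast; ring
  have hew' : (0:ℝ) ≤ (earlyWork p d μ' : ℝ) := Nat.cast_nonneg _
  nlinarith [mul_le_mul_of_nonneg_left hub (by linarith : (0:ℝ) ≤ 1 - ε)]
end

section
/- Let x : Fin (m+1) → Fin n → ℝ be a nonnegative array such that Σ_{i=0}^{m} x i j = 1 for every j ∈ Fin n, and suppose the number of pairs (i,j) with x i j ≠ 0 is at most n + 2m. Then the number of indices j for which there is no i with x i j = 1 (the fractionally assigned jobs) is at most 2m. -/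
/-- if `x : Fin (m+1) → Fin n → ℝ` is nonnegative, each column sums to `1`,
and the number of nonzero entries is at most `n + 2m`, then the number of columns `j`
containing no entry equal to `1` (the fractionally assigned jobs) is at most `2m`. -/
theorem few_fractional_jobs (n m : ℕ) (x : Fin (m + 1) → Fin n → ℝ)
    (hnn : ∀ i j, 0 ≤ x i j)
    (hsum : ∀ j, ∑ i, x i j = 1)
    (hsupp : Set.ncard {q : Fin (m + 1) × Fin n | x q.1 q.2 ≠ 0} ≤ n + 2 * m) :
    Set.ncard {j : Fin n | ¬ ∃ i, x i j = 1} ≤ 2 * m := by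
  classical
  set S : Finset (Fin (m+1) × Fin n) :=
    Finset.univ.filter (fun q => x q.1 q.2 ≠ 0) with hS
  set F : Finset (Fin n) := Finset.univ.filter (fun j => ¬ ∃ i, x i j = 1) with hF
  have hncardS : Set.ncard {q : Fin (m + 1) × Fin n | x q.1 q.2 ≠ 0} = S.card := by
    rw [hS]
    rw [← Set.ncard_coe_finset]
    congr 1
    ext q
    simp
  have hncardF : Set.ncard {j : Fin n | ¬ ∃ i, x i j = 1} = F.card := by
    rw [hF, ← Set.ncard_coe_finset]
    congr 1
    ext j
    simp
  rw [hncardF]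
  rw [hncardS] at hsupp
  -- column counts
  set c : Fin n → ℕ := fun j => (Finset.univ.filter (fun i => x i j ≠ 0)).card with hc
  have hcard : S.card = ∑ j, c j := by
    rw [hS, hc]
    rw [Finset.card_eq_sum_card_fiberwise (f := fun q => q.2) (t := Finset.univ)
      (fun q _ => Finset.mem_univ _)]
    apply Finset.sum_congr rfl
    intro j _
    apply Finset.card_bij (fun q _ => q.1)
    · intro q hq
      simp only [Finset.mem_filter, Finset.mem_univ, true_and] at hq ⊢
      rw [← hq.2]; exact hq.1
    · intro a ha b hb h
      simp only [Finset.mem_filter] at ha hb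
      exact Prod.ext h (ha.2.trans hb.2.symm)
    · intro i hi
      simp only [Finset.mem_filter, Finset.mem_univ, true_and] at hi
      exact ⟨(i, j), by simp [hi], rfl⟩
  have hc1 : ∀ j, 1 ≤ c j := by
    intro j
    rw [hc, Nat.one_le_iff_ne_zero, Ne, Finset.card_eq_zero, Finset.filter_eq_empty_iff]
    intro h
    have := hsum j
    rw [Finset.sum_congr rfl (fun i _ => not_not.mp (h (Finset.mem_univ i)))] at this
    simp at this
  have hc2 : ∀ j ∈ F, 2 ≤ c j := by
    intro j hj
    rw [hF, Finset.mem_filter] at hj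
    by_contra hlt
    push_neg at hlt
    interval_cases h : c j
    · exact absurd (hc1 j) (by omega)
    · rw [hc, Finset.card_eq_one] at h
      obtain ⟨i0, hi0⟩ := h
      have hsum' : ∑ i, x i j = x i0 j := by
        rw [← Finset.sum_filter_ne_zero, hi0, Finset.sum_singleton]
      exact hj.2 ⟨i0, by rw [← hsum', hsum j]⟩
  have : n + F.card ≤ ∑ j, c j := by
    calc n + F.card = ∑ j : Fin n, 1 + ∑ j ∈ F, 1 := by simp
    _ ≤ ∑ j : Fin n, 1 + ∑ j ∈ F, (c j - 1) := by
        gcongr with j hj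
        have := hc2 j hj; omega
    _ = ∑ j ∈ Fᶜ, 1 + (∑ j ∈ F, 1 + ∑ j ∈ F, (c j - 1)) := by
        rw [← Finset.sum_add_sum_compl F (f := fun _ => 1)]; ring
    _ = ∑ j ∈ Fᶜ, 1 + ∑ j ∈ F, c j := by
        congr 1
        rw [← Finset.sum_add_distrib]
        apply Finset.sum_congr rfl
        intro j hj
        have := hc1 j; omega
    _ ≤ ∑ j ∈ Fᶜ, c j + ∑ j ∈ F, c j := by gcongr with j hj; exact hc1 j
    _ = ∑ j, c j := by rw [add_comm, Finset.sum_add_sum_compl]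
  omega
end
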